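/- Rank-drop counterexample: let f : 𝔽₂² × 𝔽₂² → 𝔽₂ be f((u₁,u₂),(v₁,v₂)) = u₁v₁ ⊕ u₂v₂ ⊕ u₁u₂v₁, and let R be the 4×4 real matrix R_{u,v} = (-1)^{f(u,v)}. Then rank_ℝ(R) = 3, whereas the bilinear part of f has coefficient matrix Γ = I₂ of 𝔽₂-rank 2, so rank_ℝ(R) < 2^{rank_{𝔽₂}(Γ)} = 4. -/

import Mathlib

/-!
Write `f u v = φ u ⬝ᵥ v` with `φ u = (u₁ + u₁u₂, u₂)`. Then the row `u` of `R` is the Walsh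
character `v ↦ (-1)^(φ u ⬝ᵥ v)`. The Walsh matrix `(-1)^(v ⬝ᵥ w)` squares to `2ⁿ • 1` by
orthogonality of characters, so its rows are linearly independent, and the rank of `R` is the
number of distinct rows, `|range φ| = 3`: `φ` identifies `(0,1)` and `(1,1)`.
-/

/-- Sign of a bit: `(-1)^c` as a real number. -/
def sgn (c : ZMod 2) : ℝ := if c = 0 then 1 else -1

open Matrix Module

theorem Matrix.rank_submatrix_id_eq_card_range {m n k K : Type*} [Fintype m] [Fintype k]
    [DecidableEq n] [Field K] {A : Matrix n k K} (hA : LinearIndependent K A.row) (φ : m → n) :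
    (A.submatrix φ id).rank = Fintype.card (Set.range φ) := by
  have hrows : Set.range (A.submatrix φ id).row = Set.range (A.row ∘ ((↑) : Set.range φ → n)) := by
    rw [Set.range_comp, Subtype.range_coe]; exact Set.range_comp A φ
  rw [rank_eq_finrank_span_row, hrows, finrank_span_eq_card (hA.comp _ Subtype.val_injective)]

theorem sgn_add (a b : ZMod 2) : sgn (a + b) = sgn a * sgn b := by
  have h : ∀ c : ZMod 2, c = 0 ∨ c = 1 := by decide
  rcases h a with rfl | rfl <;> rcases h b with rfl | rfl <;>
    simp only [sgn, CharTwo.add_self_eq_zero, add_zero, zero_add] <;> norm_num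

theorem sgn_mul_self (a : ZMod 2) : sgn a * sgn a = 1 := by
  rw [← sgn_add, CharTwo.add_self_eq_zero, sgn, if_pos rfl]

section Walsh

variable {ι : Type*} [Fintype ι]

def walshChar (a : ι → ZMod 2) : AddChar (ι → ZMod 2) ℝ where
  toFun w := sgn (a ⬝ᵥ w)
  map_zero_eq_one' := by simp [sgn]
  map_add_eq_mul' v w := by simp only [dotProduct_add, sgn_add]

theorem walshChar_ne_zero [DecidableEq ι] {a : ι → ZMod 2} (ha : a ≠ 0) : walshChar a ≠ 0 := by
  obtain ⟨i, hi⟩ := Function.ne_iff.mp ha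
  have hai : a i = 1 := (by decide : ∀ c : ZMod 2, c ≠ 0 → c = 1) _ hi
  rw [AddChar.ne_zero_iff]
  exact ⟨Pi.single i 1, by norm_num [walshChar, sgn, hai]⟩

def walshMatrix (ι : Type*) [Fintype ι] : Matrix (ι → ZMod 2) (ι → ZMod 2) ℝ :=
  Matrix.of fun v w => sgn (v ⬝ᵥ w)

theorem walshMatrix_mul_self [DecidableEq ι] :
    walshMatrix ι * walshMatrix ι = (Fintype.card (ι → ZMod 2) : ℝ) • 1 := by
  ext v v'
  simp only [mul_apply, walshMatrix, of_apply, Matrix.smul_apply, one_apply, smul_eq_mul,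
    mul_ite, mul_one, mul_zero]
  split_ifs with h
  · simp [h, dotProduct_comm _ v', sgn_mul_self]
  · have hne : v + v' ≠ 0 := by
      intro hsum
      exact h ((eq_neg_of_add_eq_zero_left hsum).trans (funext fun i => ZMod.neg_eq_self_mod_two _))
    rw [← AddChar.sum_eq_zero_iff_ne_zero.mpr (walshChar_ne_zero hne)]
    refine Fintype.sum_congr _ _ fun w => ?_
    simp [walshChar, add_dotProduct, sgn_add, dotProduct_comm w v']

theorem isUnit_walshMatrix [DecidableEq ι] : IsUnit (walshMatrix ι) := by
  refine (isUnit_iff_isUnit_det _).mpr (isUnit_det_of_right_inverse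
    (B := (Fintype.card (ι → ZMod 2) : ℝ)⁻¹ • walshMatrix ι) ?_)
  rw [mul_smul_comm, walshMatrix_mul_self, smul_smul, inv_mul_cancel₀ (by positivity), one_smul]

theorem rank_walshMatrix_submatrix {m : Type*} [Fintype m] [DecidableEq ι]
    (φ : m → ι → ZMod 2) :
    ((walshMatrix ι).submatrix φ id).rank = Fintype.card (Set.range φ) :=
  rank_submatrix_id_eq_card_range (linearIndependent_rows_of_isUnit isUnit_walshMatrix) φ

end Walsh

theorem rank_drop_counterexample
    (f : (Fin 2 → ZMod 2) → (Fin 2 → ZMod 2) → ZMod 2)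
    (hf : ∀ u v, f u v = u 0 * v 0 + u 1 * v 1 + u 0 * u 1 * v 0)
    (R : Matrix (Fin 2 → ZMod 2) (Fin 2 → ZMod 2) ℝ)
    (hR : ∀ u v, R u v = sgn (f u v)) :
    R.rank = 3 ∧ (1 : Matrix (Fin 2) (Fin 2) (ZMod 2)).rank = 2 ∧
      R.rank < 2 ^ (1 : Matrix (Fin 2) (Fin 2) (ZMod 2)).rank := by
  set φ : (Fin 2 → ZMod 2) → Fin 2 → ZMod 2 := fun u => ![u 0 + u 0 * u 1, u 1]
  have hRφ : R = (walshMatrix (Fin 2)).submatrix φ id := by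
    ext u v
    simp only [hR, hf, φ, walshMatrix, submatrix_apply, of_apply, id, dotProduct,
      Fin.sum_univ_two, cons_val_zero, cons_val_one]
    congr 1
    ring
  have hcard : Fintype.card (Set.range φ) = 3 := by decide
  have hR3 : R.rank = 3 := by rw [hRφ, rank_walshMatrix_submatrix, hcard]
  have hΓ : (1 : Matrix (Fin 2) (Fin 2) (ZMod 2)).rank = 2 := by simp [rank_one]
  exact ⟨hR3, hΓ, by rw [hR3, hΓ]; norm_num⟩
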